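/- arXiv:1901.01999 — 4 statements merged into one kernel-verified Lean document; each statement's English description precedes it below -/
import Mathlib

section
/- If α₁,…,α_l are arbitrary real numbers and 1, θ₁,…,θ_l are real algebraic numbers that are linearly independent over ℚ, then for every ε > 0 there exist an integer q and integers p₁,…,p_l such that |q·θ_j − p_j − α_j| < ε for all j = 1,…,l. -/
/-!
Bohr's argument. If the conclusion failed for some `ε`, then for every `n ≥ 0` some coordinate of
`n θ - α` would stay at distance `δ = min ε (1/2)` from `ℤ`, so that
`ψ(n) = ∏ⱼ (1 + e(n θⱼ - αⱼ))`, with `e(x) = exp(2πix)`, satisfies `|ψ(n)| ≤ 2^l cos(πδ)`.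
Expanding `ψ(n)^(2k)` gives a sum over `m ∈ {0,…,2k}^l` of coefficients times `e(∑ⱼ mⱼθⱼ)^n`,
and the linear independence of `1, θ₁, …, θ_l` makes these frequencies distinct. Averaging over
`n` therefore isolates each coefficient, so the central one, of modulus `C(2k,k)^l`, is at most
`(2^l cos(πδ))^(2k)`. Since `C(2k,k) ≥ 4^k / 2k` and `cos(πδ) < 1`, this fails for large `k`.
-/

open Finset Filter Topology Real
open scoped FourierTransform

theorem prod_one_add_pow {ι R : Type*} [Fintype ι] [DecidableEq ι] [CommSemiring R]
    (a : ι → R) (k : ℕ) :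
    (∏ i, (1 + a i)) ^ k =
      ∑ m ∈ Fintype.piFinset fun _ => range (k + 1), ∏ i, (k.choose (m i) * a i ^ m i) := by
  simp_rw [← prod_pow, add_comm (1 : R), add_pow, one_pow, mul_one, mul_comm (a _ ^ _)]
  exact prod_univ_sum _ _

theorem Real.fourierChar_eq_one_iff {x : ℝ} : 𝐞 x = 1 ↔ ∃ p : ℤ, x = p := by
  simp only [Real.fourierChar_apply', Circle.exp_eq_one, mul_comm _ (2 * π),
    mul_right_inj' two_pi_pos.ne']

theorem norm_one_add_fourierChar (t : ℝ) : ‖1 + (𝐞 t : ℂ)‖ = 2 * |cos (π * t)| := by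
  have h : (1 + 𝐞 t : ℂ) = -(Complex.exp (Complex.I * ↑(2 * π * t + π)) - 1) := by
    rw [Real.fourierChar_apply, Complex.ofReal_add, mul_add, Complex.exp_add, mul_comm _ (π : ℂ),
      Complex.exp_pi_mul_I, mul_comm Complex.I]
    ring
  rw [h, norm_neg, Complex.norm_exp_I_mul_ofReal_sub_one, Real.norm_eq_abs, abs_mul,
    abs_two, show (2 * π * t + π) / 2 = π * t + π / 2 by ring, sin_add_pi_div_two]

theorem abs_cos_pi_mul_le {t δ : ℝ} (hδ : 0 ≤ δ) (ht : δ ≤ |t - round t|) :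
    |cos (π * t)| ≤ cos (π * δ) := by
  have hhalf := abs_sub_round t
  have hcos_nonneg : 0 ≤ cos (π * |t - round t|) :=
    cos_nonneg_of_mem_Icc ⟨by nlinarith [pi_pos, abs_nonneg (t - round t)], by nlinarith [pi_pos]⟩
  calc |cos (π * t)| = |cos (π * t - round t * π)| := by
        rw [cos_sub_int_mul_pi, abs_mul, abs_neg_one_zpow, one_mul]
    _ = cos (π * |t - round t|) := by
        rw [← cos_abs (π * t - _), show π * t - round t * π = π * (t - round t) by ring,
          abs_mul, abs_of_pos pi_pos, abs_of_nonneg hcos_nonneg]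
    _ ≤ cos (π * δ) := by
        apply cos_le_cos_of_nonneg_of_le_pi <;> nlinarith [pi_pos]

theorem norm_one_add_fourierChar_le {t δ : ℝ} (hδ : 0 ≤ δ) (ht : δ ≤ |t - round t|) :
    ‖1 + (𝐞 t : ℂ)‖ ≤ 2 * cos (π * δ) := by
  rw [norm_one_add_fourierChar]
  gcongr
  exact abs_cos_pi_mul_le hδ ht

theorem norm_prod_one_add_le {ι : Type*} [Fintype ι] (z : ι → Circle) (j : ι) {ρ : ℝ}
    (hj : ‖1 + (z j : ℂ)‖ ≤ 2 * ρ) : ‖∏ i, (1 + (z i : ℂ))‖ ≤ 2 ^ Fintype.card ι * ρ := by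
  classical
  have hle_two : ∀ i, ‖1 + (z i : ℂ)‖ ≤ 2 := fun i =>
    (norm_add_le _ _).trans (by rw [norm_one, Circle.norm_coe]; norm_num)
  have hcard : Fintype.card ι = (univ.erase j).card + 1 := by
    rw [card_erase_of_mem (mem_univ j), card_univ,
      Nat.sub_add_cancel (Fintype.card_pos_iff.mpr ⟨j⟩)]
  rw [norm_prod, ← mul_prod_erase univ _ (mem_univ j), hcard, pow_succ]
  calc ‖1 + (z j : ℂ)‖ * ∏ i ∈ univ.erase j, ‖1 + (z i : ℂ)‖
      ≤ 2 * ρ * ∏ _i ∈ univ.erase j, (2 : ℝ) := by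
        gcongr with i
        · exact (norm_nonneg _).trans hj
        · exact hle_two i
    _ = _ := by rw [prod_const]; ring

open Classical in
theorem Circle.tendsto_average_pow (w : Circle) :
    Tendsto (fun N : ℕ => (N : ℂ)⁻¹ * ∑ n ∈ range N, (w : ℂ) ^ n) atTop
      (𝓝 (if w = 1 then 1 else 0)) := by
  split_ifs with hw
  · subst hw
    refine tendsto_const_nhds.congr' ?_
    filter_upwards [eventually_ne_atTop 0] with N hN
    simp [hN]
  · have hw' : (w : ℂ) ≠ 1 := by rwa [Ne, Circle.coe_eq_one]
    refine squeeze_zero_norm (fun N => ?_)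
      (tendsto_const_div_atTop_nhds_zero_nat (2 / ‖(w : ℂ) - 1‖))
    have hpow_sub_one : ‖(w : ℂ) ^ N - 1‖ ≤ 2 :=
      (norm_sub_le _ _).trans (by rw [norm_pow, Circle.norm_coe, one_pow, norm_one]; norm_num)
    rw [geom_sum_eq hw', norm_mul, norm_inv, Complex.norm_natCast, norm_div, inv_mul_eq_div]
    gcongr

theorem norm_le_of_forall_norm_sum_mul_pow_le {ι : Type*} {s : Finset ι} {z : ι → Circle}
    (hz : Set.InjOn z s) (c : ι → ℂ) {M : ℝ}
    (hM : ∀ n : ℕ, ‖∑ i ∈ s, c i * (z i : ℂ) ^ n‖ ≤ M) {i₀ : ι} (hi₀ : i₀ ∈ s) :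
    ‖c i₀‖ ≤ M := by
  set f : ℕ → ℂ := fun n => (∑ i ∈ s, c i * (z i : ℂ) ^ n) * (((z i₀)⁻¹ : Circle) : ℂ) ^ n
  have hf_norm : ∀ n, ‖f n‖ ≤ M := fun n => by
    simpa [f, norm_mul, norm_pow, Circle.norm_coe] using hM n
  have hf_eq : ∀ n, f n = ∑ i ∈ s, c i * ((z i / z i₀ : Circle) : ℂ) ^ n := fun n => by
    simp only [f, sum_mul, mul_assoc, div_eq_mul_inv, Circle.coe_mul, Circle.coe_inv, mul_pow]
  classical
  -- Averaging kills every term but `i = i₀`, since `z i / z i₀ ≠ 1` for the others.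
  have hlim : Tendsto (fun N : ℕ => (N : ℂ)⁻¹ * ∑ n ∈ range N, f n) atTop (𝓝 (c i₀)) := by
    have := tendsto_finsetSum s fun i _ =>
      (Circle.tendsto_average_pow (z i / z i₀)).const_mul (c i)
    convert this using 2 with N
    · simp only [hf_eq, sum_comm (s := range N), mul_sum]
      exact sum_congr rfl fun i _ => sum_congr rfl fun n _ => by ring
    · rw [sum_eq_single_of_mem i₀ hi₀ fun i hi hne => by simp [div_eq_one, hz.ne hi hi₀ hne]]
      simp
  refine le_of_tendsto hlim.norm ?_
  filter_upwards [eventually_ne_atTop 0] with N hN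
  calc ‖(N : ℂ)⁻¹ * ∑ n ∈ range N, f n‖ ≤ (N : ℝ)⁻¹ * (N * M) := by
        rw [norm_mul, norm_inv, Complex.norm_natCast]
        gcongr
        simpa using norm_sum_le_of_le (range N) fun n _ => hf_norm n
    _ = M := by field_simp

theorem exists_pow_lt_centralBinom_pow (l : ℕ) {ρ : ℝ} (hρ₀ : 0 ≤ ρ) (hρ₁ : ρ < 1) :
    ∃ k : ℕ, (2 ^ l * ρ) ^ (2 * k) < (k.centralBinom : ℝ) ^ l := by
  have hlim : Tendsto (fun k : ℕ => (2 * k : ℝ) ^ l * (ρ ^ 2) ^ k) atTop (𝓝 0) := by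
    simpa [mul_pow, mul_assoc] using
      (tendsto_pow_const_mul_const_pow_of_lt_one l (sq_nonneg ρ) (by nlinarith)).const_mul (2 ^ l)
  obtain ⟨k, hk_lt, hk_pos⟩ :=
    ((hlim.eventually_lt_const one_pos).and (eventually_gt_atTop 0)).exists
  refine ⟨k, ?_⟩
  have hbinom : (4 : ℝ) ^ k ≤ 2 * k * k.centralBinom := by
    exact_mod_cast Nat.four_pow_le_two_mul_self_mul_centralBinom k hk_pos
  have hbinom_pos : (0 : ℝ) < (k.centralBinom : ℝ) ^ l := by
    have := k.centralBinom_pos; positivity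
  calc (2 ^ l * ρ) ^ (2 * k) = ((2 : ℝ) ^ (2 * k)) ^ l * ρ ^ (2 * k) := by
        rw [mul_pow, ← pow_mul, ← pow_mul, mul_comm l]
    _ = ((4 : ℝ) ^ k) ^ l * (ρ ^ 2) ^ k := by rw [pow_mul, pow_mul]; norm_num
    _ ≤ (2 * k * k.centralBinom : ℝ) ^ l * (ρ ^ 2) ^ k := by gcongr
    _ = ((2 * k : ℝ) ^ l * (ρ ^ 2) ^ k) * (k.centralBinom : ℝ) ^ l := by ring
    _ < 1 * (k.centralBinom : ℝ) ^ l := by gcongr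
    _ = _ := one_mul _

section Frequencies

variable {l : ℕ} {θ : Fin l → ℝ}

theorem LinearIndependent.eq_zero_of_sum_mul_eq_intCast
    (hli : LinearIndependent ℚ (Fin.cons (1 : ℝ) θ : Fin (l + 1) → ℝ)) {c : Fin l → ℤ} {p : ℤ}
    (h : ∑ j, c j * θ j = p) : c = 0 := by
  have hz := Fintype.linearIndependent_iff.mp (hli.restrict_scalars' ℤ) (Fin.cons (-p) c)
    (by simp [Fin.sum_univ_succ, zsmul_eq_mul, h])
  funext j
  simpa using hz j.succ

theorem LinearIndependent.injective_fourierChar_sum_mul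
    (hli : LinearIndependent ℚ (Fin.cons (1 : ℝ) θ : Fin (l + 1) → ℝ)) :
    Function.Injective fun m : Fin l → ℕ => 𝐞 (∑ j, m j * θ j) := by
  intro m m' h
  obtain ⟨p, hp⟩ : ∃ p : ℤ, ∑ j, m j * θ j - ∑ j, m' j * θ j = p := by
    rw [← Real.fourierChar_eq_one_iff, sub_eq_add_neg, AddChar.map_add_eq_mul,
      AddChar.map_neg_eq_inv, mul_inv_eq_one]
    exact h
  have hc := hli.eq_zero_of_sum_mul_eq_intCast (c := fun j => (m j : ℤ) - m' j) (p := p)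
    (by simpa [sub_mul] using hp)
  funext j
  simpa [sub_eq_zero] using congr_fun hc j

theorem prod_one_add_fourierChar_pow (α : Fin l → ℝ) (n k : ℕ) :
    (∏ j, (1 + (𝐞 (n * θ j - α j) : ℂ))) ^ k =
      ∑ m ∈ Fintype.piFinset fun _ => range (k + 1),
        (∏ j, (k.choose (m j) : ℂ)) * 𝐞 (-∑ j, m j * α j) * (𝐞 (∑ j, m j * θ j) : ℂ) ^ n := by
  rw [prod_one_add_pow]
  refine sum_congr rfl fun m _ => ?_
  have hchar : ∏ j, (𝐞 (n * θ j - α j) : ℂ) ^ m j =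
      𝐞 (-∑ j, m j * α j) * (𝐞 (∑ j, m j * θ j) : ℂ) ^ n := by
    simp only [← sum_neg_distrib, Real.fourierChar_apply, ← Complex.exp_nat_mul, ← Complex.exp_sum,
      ← Complex.exp_add]
    congr 1
    push_cast
    simp only [sum_mul, mul_sum, ← sum_add_distrib]
    exact sum_congr rfl fun j _ => by ring
  rw [prod_mul_distrib, hchar, mul_assoc]

theorem centralBinom_pow_le_of_forall_norm_prod_le
    (hli : LinearIndependent ℚ (Fin.cons (1 : ℝ) θ : Fin (l + 1) → ℝ)) {α : Fin l → ℝ} {M : ℝ}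
    (hM : ∀ n : ℕ, ‖∏ j, (1 + (𝐞 (n * θ j - α j) : ℂ))‖ ≤ M) (k : ℕ) :
    (k.centralBinom : ℝ) ^ l ≤ M ^ (2 * k) := by
  have hcoeff := norm_le_of_forall_norm_sum_mul_pow_le hli.injective_fourierChar_sum_mul.injOn
    (fun m => (∏ j, ((2 * k).choose (m j) : ℂ)) * 𝐞 (-∑ j, m j * α j)) (M := M ^ (2 * k))
    (fun n => by
      rw [← prod_one_add_fourierChar_pow, norm_pow]
      exact pow_le_pow_left₀ (norm_nonneg _) (hM n) _)
    (i₀ := fun _ => k) (by simp only [Fintype.mem_piFinset, mem_range]; omega)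
  simpa [norm_mul, norm_prod, Circle.norm_coe, Nat.centralBinom_eq_two_mul_choose] using hcoeff

end Frequencies

theorem kronecker_approximation_general (l : ℕ) (α θ : Fin l → ℝ)
    (hli : LinearIndependent ℚ (Fin.cons (1 : ℝ) θ : Fin (l + 1) → ℝ)) :
    ∀ ε > 0, ∃ (q : ℤ) (p : Fin l → ℤ),
      ∀ j, |(q : ℝ) * θ j - (p j : ℝ) - α j| < ε := by
  intro ε hε
  by_contra! hfar
  set δ := min ε (1 / 2)
  have hδ₀ : 0 < δ := lt_min hε one_half_pos
  have hδ₁ : δ ≤ 1 / 2 := min_le_right _ _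
  have hbad : ∀ n : ℕ, ∃ j, δ ≤ |(n * θ j - α j) - round (n * θ j - α j)| := fun n => by
    obtain ⟨j, hj⟩ := hfar n fun j => round (n * θ j - α j)
    exact ⟨j, (min_le_left _ _).trans (by simpa [sub_right_comm] using hj)⟩
  have hψ : ∀ n : ℕ, ‖∏ j, (1 + (𝐞 (n * θ j - α j) : ℂ))‖ ≤ 2 ^ l * cos (π * δ) := fun n => by
    obtain ⟨j, hj⟩ := hbad n
    simpa using norm_prod_one_add_le _ j (norm_one_add_fourierChar_le hδ₀.le hj)
  have hρ₀ : 0 ≤ cos (π * δ) :=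
    cos_nonneg_of_mem_Icc ⟨by nlinarith [pi_pos], by nlinarith [pi_pos]⟩
  have hρ₁ : cos (π * δ) < 1 := by
    simpa using cos_lt_cos_of_nonneg_of_le_pi le_rfl (by nlinarith [pi_pos]) (by positivity)
  obtain ⟨k, hk⟩ := exists_pow_lt_centralBinom_pow l hρ₀ hρ₁
  exact (centralBinom_pow_le_of_forall_norm_prod_le hli hψ k).not_gt hk

/-- Kronecker's simultaneous approximation theorem. -/
theorem kronecker_approximation (l : ℕ) (α θ : Fin l → ℝ)
    (halg : ∀ j, IsAlgebraic ℚ (θ j))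
    (hli : LinearIndependent ℚ (Fin.cons (1 : ℝ) θ : Fin (l + 1) → ℝ)) :
    ∀ ε > 0, ∃ (q : ℤ) (p : Fin l → ℤ),
      ∀ j, |(q : ℝ) * θ j - (p j : ℝ) - α j| < ε :=
  kronecker_approximation_general l α θ hli
end

section
/- Let G be a graph with adjacency matrix A and transition matrix H(t) = exp(−itA). Suppose G is periodic, i.e., there exist τ ≠ 0 and γ ∈ ℂ with |γ| = 1 such that H(τ) = γI. Then G admits perfect state transfer between vertices u and v if and only if it admits pretty good state transfer between u and v. -/
/-!
A periodic graph has `H(t + τ) = γ₀ H(t)`, so every `H(t) e_u` is a unimodular multiple of some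
`H(s) e_u` with `|s| ≤ |τ|`. The set of such multiples is a continuous image of the compact set
`S¹ × [-|τ|, |τ|]`, hence closed; a limit `γ e_v` of pretty good state transfer therefore already
lies in it, which is perfect state transfer.
-/

open Matrix Complex Filter Topology

attribute [local instance] Matrix.linftyOpNormedRing Matrix.linftyOpNormedAlgebra

/-- Transition matrix `H(t) = exp(-itA)` of a graph with adjacency matrix `A`. -/
noncomputable def transM {n : ℕ} (A : Matrix (Fin n) (Fin n) ℂ) (t : ℝ) :
    Matrix (Fin n) (Fin n) ℂ :=
  NormedSpace.exp ((-(t : ℂ) * Complex.I) • A)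

/-- The standard basis vector `e_u` of `ℂⁿ`. -/
def eVec {n : ℕ} (u : Fin n) : Fin n → ℂ := Pi.single u 1

section QuasiPeriodic

variable {E : Type*} [NormedAddCommGroup E] [NormedSpace ℂ E] {f : ℝ → E} {τ : ℝ} {γ₀ : ℂ}

lemma add_int_mul_eq_zpow_smul (hf : ∀ t, f (t + τ) = γ₀ • f t) (hγ₀ : γ₀ ≠ 0) (m : ℤ)
    (t : ℝ) : f (t + m * τ) = γ₀ ^ m • f t := by
  induction m using Int.induction_on generalizing t with
  | zero => simp
  | succ k ih =>
    rw [show t + ((k + 1 : ℤ) : ℝ) * τ = t + ((k : ℤ) : ℝ) * τ + τ by push_cast; ring, hf, ih,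
      smul_smul, zpow_add_one₀ hγ₀, mul_comm]
  | pred k ih =>
    have h := hf (t + ((-(k : ℤ) - 1 : ℤ) : ℝ) * τ)
    rw [show t + ((-(k : ℤ) - 1 : ℤ) : ℝ) * τ + τ = t + ((-k : ℤ) : ℝ) * τ by push_cast; ring,
      ih] at h
    rw [zpow_sub_one₀ hγ₀, mul_comm (γ₀ ^ _), ← smul_smul, h, smul_smul, inv_mul_cancel₀ hγ₀,
      one_smul]

lemma exists_mem_closedBall_eq_smul (hf : ∀ t, f (t + τ) = γ₀ • f t) (hγ₀ : ‖γ₀‖ = 1)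
    (hτ : τ ≠ 0) (t : ℝ) :
    ∃ c ∈ Metric.sphere (0 : ℂ) 1, ∃ s ∈ Metric.closedBall (0 : ℝ) |τ|, f t = c • f s := by
  have hγ₀ne : γ₀ ≠ 0 := norm_ne_zero_iff.mp (by rw [hγ₀]; exact one_ne_zero)
  refine ⟨γ₀ ^ ⌊t / τ⌋, by simp [hγ₀], Int.fract (t / τ) * τ, ?_, ?_⟩
  · rw [mem_closedBall_zero_iff, norm_mul, Real.norm_eq_abs, abs_of_nonneg (Int.fract_nonneg _)]
    exact mul_le_of_le_one_left (abs_nonneg τ) (Int.fract_lt_one _).le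
  · rw [← add_int_mul_eq_zpow_smul hf hγ₀ne, Int.fract, sub_mul, div_mul_cancel₀ t hτ,
      sub_add_cancel]

lemma exists_smul_eq_of_mem_closure_range (hcont : Continuous f)
    (hf : ∀ t, f (t + τ) = γ₀ • f t) (hγ₀ : ‖γ₀‖ = 1) (hτ : τ ≠ 0) {x : E}
    (hx : x ∈ closure (Set.range f)) : ∃ s, ∃ c ∈ Metric.sphere (0 : ℂ) 1, f s = c • x := by
  set K := (fun p : ℂ × ℝ => p.1 • f p.2) '' (Metric.sphere 0 1 ×ˢ Metric.closedBall 0 |τ|)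
  have hK : IsClosed K :=
    ((isCompact_sphere 0 1).prod (isCompact_closedBall 0 |τ|)).image
      (continuous_fst.smul (hcont.comp continuous_snd)) |>.isClosed
  have hrange : Set.range f ⊆ K := by
    rintro _ ⟨t, rfl⟩
    obtain ⟨c, hc, s, hs, hts⟩ := exists_mem_closedBall_eq_smul hf hγ₀ hτ t
    exact ⟨(c, s), ⟨hc, hs⟩, hts.symm⟩
  obtain ⟨⟨c, s⟩, ⟨hc, -⟩, rfl⟩ := closure_minimal hrange hK hx
  have hc0 : c ≠ 0 := ne_zero_of_mem_unit_sphere ⟨c, hc⟩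
  exact ⟨s, c⁻¹, by simpa using hc, by rw [smul_smul, inv_mul_cancel₀ hc0, one_smul]⟩

end QuasiPeriodic

section Transition

variable {n : ℕ} (A : Matrix (Fin n) (Fin n) ℂ)

lemma transM_add (s t : ℝ) : transM A (s + t) = transM A s * transM A t := by
  rw [transM, transM, transM, ← Matrix.exp_add_of_commute _ _
    (((Commute.refl A).smul_left _).smul_right _), ← add_smul]
  congr 2
  push_cast
  ring

lemma continuous_transM : Continuous (transM A) :=
  NormedSpace.exp_continuous.comp
    (((continuous_ofReal.neg).mul continuous_const).smul continuous_const)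

lemma transM_add_period {τ : ℝ} {γ₀ : ℂ} (hper : transM A τ = γ₀ • 1) (t : ℝ) :
    transM A (t + τ) = γ₀ • transM A t := by
  rw [add_comm, transM_add, hper, smul_mul, one_mul]

end Transition

/-- For a periodic graph, perfect state transfer is equivalent to pretty good
state transfer. -/
theorem pst_iff_pgst_of_periodic {n : ℕ} (G : SimpleGraph (Fin n)) [DecidableRel G.Adj]
    (u v : Fin n)
    (τ : ℝ) (hτ : τ ≠ 0) (γ₀ : ℂ) (hγ₀ : ‖γ₀‖ = 1)
    (hper : transM (G.adjMatrix ℂ) τ = γ₀ • (1 : Matrix (Fin n) (Fin n) ℂ)) :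
    (∃ (t₀ : ℝ) (γ : ℂ), ‖γ‖ = 1 ∧
        transM (G.adjMatrix ℂ) t₀ *ᵥ eVec u = γ • eVec v) ↔
    (∃ (t : ℕ → ℝ) (γ : ℂ), ‖γ‖ = 1 ∧
        Tendsto (fun k => transM (G.adjMatrix ℂ) (t k) *ᵥ eVec u) atTop
          (nhds (γ • eVec v))) := by
  constructor
  · rintro ⟨t₀, γ, hγ, h⟩
    exact ⟨fun _ => t₀, γ, hγ, by simp only [h, tendsto_const_nhds]⟩
  · rintro ⟨t, γ, hγ, htend⟩
    have hcont : Continuous fun s => transM (G.adjMatrix ℂ) s *ᵥ eVec u :=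
      (continuous_transM _).matrix_mulVec continuous_const
    have hf : ∀ s, transM (G.adjMatrix ℂ) (s + τ) *ᵥ eVec u
        = γ₀ • (transM (G.adjMatrix ℂ) s *ᵥ eVec u) := fun s => by
      rw [transM_add_period _ hper, smul_mulVec]
    have hlim : γ • eVec v ∈ closure (Set.range fun s => transM (G.adjMatrix ℂ) s *ᵥ eVec u) :=
      mem_closure_of_tendsto htend (Eventually.of_forall fun k => ⟨t k, rfl⟩)
    obtain ⟨s, c, hc, hs⟩ := exists_smul_eq_of_mem_closure_range hcont hf hγ₀ hτ hlim
    exact ⟨s, c * γ, by rw [norm_mul, mem_sphere_zero_iff_norm.mp hc, hγ, one_mul],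
      by rw [hs, smul_smul]⟩
end

section
/- Let n = 2^k with k ≥ 3, and let ω = exp(2πi/n). The real numbers λ_l = 2cos(2πl/n) for l = 0, 1, …, n/4 − 1 (the distinct positive eigenvalues of the n-cycle, together with λ₀ = 2) are linearly independent over ℚ. -/
/-!
Let `ζ` be a primitive `2^k`-th root of unity and `q = 2^(k-2)`, so that `λ_l = ζ^l + ζ⁻¹^l`.
Multiplying a rational relation `∑ c_l λ_l = 0` by `ζ^q` makes it a polynomial relation
`∑ c_l (ζ^(q+l) + ζ^(q-l)) = 0` of degree `< 2q = φ(2^k)`, the degree of the minimal polynomial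
of `ζ` over `ℚ`. Hence the polynomial vanishes, and its coefficient at `X^(q+l)`, which is `c_l`
(or `2 c_0` when `l = 0`), is zero.
-/

open Real Polynomial

theorem linearIndependent_pow_add_inv_pow {K L : Type*} [Field K] [Field L] [Algebra K L]
    [NeZero (2 : K)] {x : L} (hx : x ≠ 0) {q : ℕ} (hq : 2 * q ≤ (minpoly K x).natDegree) :
    LinearIndependent K fun l : Fin q => x ^ (l : ℕ) + x⁻¹ ^ (l : ℕ) := by
  rw [Fintype.linearIndependent_iff]
  intro c hc
  set P : K[X] := ∑ l : Fin q, c l • (X ^ (q + l) + X ^ (q - l)) with hP_def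
  have hP_root : aeval x P = 0 := by
    calc aeval x P = x ^ q * ∑ l : Fin q, c l • (x ^ (l : ℕ) + x⁻¹ ^ (l : ℕ)) := by
          simp only [hP_def, map_sum, map_smul, Finset.mul_sum, mul_smul_comm]
          refine Finset.sum_congr rfl fun l _ => ?_
          simp [pow_add, pow_sub₀ x hx l.is_le', mul_add]
      _ = 0 := by rw [hc, mul_zero]
  have hP_deg : P.degree < ↑(2 * q) := by
    rw [← mem_degreeLT]
    refine Submodule.sum_mem _ fun l _ => Submodule.smul_mem _ _ (add_mem ?_ ?_) <;>
      rw [mem_degreeLT, degree_X_pow, Nat.cast_lt] <;> omega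
  have hP : P = 0 := by
    by_contra hP
    have h_min_le := natDegree_le_natDegree (minpoly.degree_le_of_ne_zero K x hP hP_root)
    have h_lt := (natDegree_lt_iff_degree_lt hP).mpr hP_deg
    omega
  intro i
  have hcoeff := congrArg (coeff · (q + i)) hP
  simp only [hP_def, finsetSum_coeff, coeff_smul, coeff_add, coeff_X_pow, smul_eq_mul, mul_add,
    mul_ite, mul_one, mul_zero, Finset.sum_add_distrib, coeff_zero] at hcoeff
  have h_plus : ∀ l : Fin q, (q + i = q + l ↔ l = i) := fun l => by rw [Fin.ext_iff]; omega
  have h_minus : ∀ l : Fin q, (q + i = q - l ↔ (i : ℕ) = 0 ∧ l = i) := fun l => by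
    rw [Fin.ext_iff]; omega
  simp only [h_plus, h_minus, Finset.sum_ite_eq', Finset.mem_univ, if_true] at hcoeff
  by_cases hi : (i : ℕ) = 0
  · simpa [hi, ← two_mul, two_ne_zero] using hcoeff
  · simpa [hi] using hcoeff

theorem two_mul_cos_two_pi_div_eq_pow_add_inv_pow (n l : ℕ) :
    ((2 * cos (2 * π * l / n) : ℝ) : ℂ) =
      Complex.exp (2 * π * Complex.I / n) ^ l + (Complex.exp (2 * π * Complex.I / n))⁻¹ ^ l := by
  rw [← Complex.exp_neg, ← Complex.exp_nat_mul, ← Complex.exp_nat_mul]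
  push_cast
  rw [Complex.two_cos]
  congr 2 <;> ring

/-- The distinct positive eigenvalues `λ_l = 2cos(2πl/2^k)`, `0 ≤ l < 2^{k-2}`,
of the cycle `C_{2^k}` are linearly independent over `ℚ`. -/
theorem cycle_eigenvalues_linearIndependent (k : ℕ) (hk : 3 ≤ k) :
    LinearIndependent ℚ
      (fun l : Fin (2 ^ (k - 2)) =>
        2 * Real.cos (2 * Real.pi * (l : ℕ) / (2 ^ k : ℕ))) := by
  set ζ : ℂ := Complex.exp (2 * π * Complex.I / (2 ^ k : ℕ))
  have hζ : IsPrimitiveRoot ζ (2 ^ k) := Complex.isPrimitiveRoot_exp _ (by positivity)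
  have hdeg : 2 * 2 ^ (k - 2) ≤ (minpoly ℚ ζ).natDegree := by
    rw [← cyclotomic_eq_minpoly_rat hζ (by positivity), natDegree_cyclotomic,
      Nat.totient_prime_pow Nat.prime_two (by omega), ← pow_succ']
    simp only [Nat.add_one_sub_one, mul_one]
    exact Nat.pow_le_pow_right two_pos (by omega)
  refine .of_comp (algebraMap ℝ ℂ).toRatAlgHom.toLinearMap ?_
  rw [show _ ∘ _ = _ from funext fun l : Fin (2 ^ (k - 2)) =>
    two_mul_cos_two_pi_div_eq_pow_add_inv_pow (2 ^ k) l]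
  exact linearIndependent_pow_add_inv_pow (Complex.exp_ne_zero _) hdeg
end

section
/- Let n = 2^k and let λ_l = 2cos(2πl/n) for 0 ≤ l ≤ n−1. For every δ > 0 there exists t of the form (2q+1)π/2 with q ∈ ℤ such that for each l there is an integer l' with |λ_l t − l'π| < δ/n. -/
open Real Finset Filter Topology Polynomial

/-!
For `n = 2 ^ k` every eigenvalue `2 cos (2πl/n)` is, up to sign, one of `2, 0` or
`θᵢ = 2 cos (2πi/n)` with `0 < i < n/4`. As `φ(n) = n/2` and `θᵢ = ζ^i - ζ^(n/2 - i)` for a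
primitive `n`-th root of unity `ζ`, an integer relation between `1` and the `θᵢ` would give a
nonzero rational polynomial of degree `< φ(n)` vanishing at `ζ`; so `1, θᵢ` are linearly
independent over `ℚ`. Kronecker's theorem then yields `q` with every `(2q + 1) θᵢ / 2` close to an
integer, and `t = (2q + 1)π/2` works since `λ t = π (2q + 1) λ / 2`.

Kronecker's theorem is proved by Bohr's averaging argument. The kernel `∏ᵢ (2 cos πxᵢ)^(2p)` is a
trigonometric polynomial with constant term `C(2p, p)^d`, so by independence its averages along
the orbit `qθ - α` tend to `C(2p, p)^d > (4^p / p)^d`. If the orbit stayed `ε`-far from `ℤ^d` in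
some coordinate, the kernel would be at most `4^(pd) cos (πε)^(2p)` along it, which is smaller
for large `p`.
-/

lemma abs_cos_pi_mul_le_s8 {ε x : ℝ} (hε : 0 ≤ ε) (hx : ∀ z : ℤ, ε ≤ |x - z|) :
    |cos (π * x)| ≤ cos (π * ε) := by
  set y := x - round x
  have hy : |y| ≤ 1 / 2 := abs_sub_round x
  have hεy : ε ≤ |y| := hx (round x)
  have hcos : |cos (π * x)| = cos (π * |y|) := by
    have : π * x = π * y + round x * π := by simp only [y]; ring
    rw [this, cos_add_int_mul_pi, abs_mul, abs_zpow, abs_neg, abs_one, one_zpow, one_mul,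
      ← cos_abs, abs_mul, abs_of_pos pi_pos, abs_of_nonneg]
    exact cos_nonneg_of_neg_pi_div_two_le_of_le (by nlinarith [pi_pos, abs_nonneg y])
      (by nlinarith [pi_pos])
  rw [hcos]
  exact cos_le_cos_of_nonneg_of_le_pi (by nlinarith [pi_pos]) (by nlinarith [pi_pos])
    (by nlinarith [pi_pos])

namespace Kronecker

noncomputable def e (x : ℝ) : ℂ := Complex.exp (↑(2 * π * x) * Complex.I)

lemma e_add (x y : ℝ) : e (x + y) = e x * e y := by
  simp only [e, mul_add, Complex.ofReal_add, add_mul, Complex.exp_add]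

lemma e_nat_mul (q : ℕ) (x : ℝ) : e (q * x) = e x ^ q := by
  rw [e, e, ← Complex.exp_nat_mul]; push_cast; ring_nf

lemma e_sum {ι : Type*} (s : Finset ι) (f : ι → ℝ) : e (∑ i ∈ s, f i) = ∏ i ∈ s, e (f i) := by
  simp only [e, Finset.mul_sum, Complex.ofReal_sum, Finset.sum_mul, Complex.exp_sum]

lemma norm_e (x : ℝ) : ‖e x‖ = 1 := by
  rw [e, Complex.norm_exp_ofReal_mul_I]

lemma e_eq_one_iff {x : ℝ} : e x = 1 ↔ ∃ z : ℤ, x = z := by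
  rw [e, Complex.exp_eq_one_iff]
  refine exists_congr fun z => ?_
  rw [show (z : ℂ) * (2 * π * Complex.I) = ((2 * π * z : ℝ) : ℂ) * Complex.I by push_cast; ring,
    mul_left_inj' Complex.I_ne_zero, Complex.ofReal_inj, mul_right_inj' two_pi_pos.ne']

lemma two_cos_pi_mul (x : ℝ) : ((2 * cos (π * x) : ℝ) : ℂ) = e (x / 2) + e (-(x / 2)) := by
  rw [e, e, Complex.ofReal_mul, Complex.ofReal_ofNat, Complex.ofReal_cos, Complex.two_cos]
  congr 2 <;> push_cast <;> ring

lemma two_cos_pi_mul_pow (p : ℕ) (x : ℝ) :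
    ((2 * cos (π * x)) ^ (2 * p) : ℝ) =
      ∑ j ∈ range (2 * p + 1), ((2 * p).choose j : ℂ) * e (((j : ℤ) - p : ℤ) * x) := by
  rw [Complex.ofReal_pow, two_cos_pi_mul, add_pow]
  refine sum_congr rfl fun j hj => ?_
  have hj : j ≤ 2 * p := Nat.lt_succ_iff.mp (mem_range.mp hj)
  rw [← e_nat_mul, ← e_nat_mul, ← e_add, mul_comm]
  congr 2
  push_cast [Nat.cast_sub hj]
  ring

lemma norm_sum_range_pow_le {w : ℂ} (hw : ‖w‖ = 1) (hw1 : w ≠ 1) (Q : ℕ) :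
    ‖∑ q ∈ range Q, w ^ q‖ ≤ 2 / ‖w - 1‖ := by
  rw [geom_sum_eq hw1, norm_div]
  gcongr
  calc ‖w ^ Q - 1‖ ≤ ‖w ^ Q‖ + ‖(1 : ℂ)‖ := norm_sub_le _ _
    _ = 2 := by rw [norm_pow, hw, one_pow, norm_one]; norm_num

lemma tendsto_average_e {a : ℝ} (ha : ∀ z : ℤ, a ≠ z) (b : ℝ) :
    Tendsto (fun Q : ℕ => (Q : ℂ)⁻¹ * ∑ q ∈ range Q, e (q * a + b)) atTop (𝓝 0) := by
  have hw1 : e a ≠ 1 := fun h => by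
    obtain ⟨z, hz⟩ := e_eq_one_iff.mp h
    exact ha z hz
  have hbound : Tendsto (fun Q : ℕ => 2 / ‖e a - 1‖ * (Q : ℝ)⁻¹) atTop (𝓝 0) := by
    simpa using (tendsto_inv_atTop_zero.comp tendsto_natCast_atTop_atTop).const_mul
      (2 / ‖e a - 1‖)
  refine squeeze_zero_norm (fun Q => ?_) hbound
  simp only [e_add, e_nat_mul, ← sum_mul, norm_mul, norm_inv, Complex.norm_natCast, norm_e,
    mul_one]
  rw [mul_comm]
  gcongr
  exact norm_sum_range_pow_le (norm_e a) hw1 Q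

variable {ι : Type*} [Fintype ι]

noncomputable def cosKernel (p : ℕ) (x : ι → ℝ) : ℝ := ∏ i, (2 * cos (π * x i)) ^ (2 * p)

lemma cosKernel_eq_sum [DecidableEq ι] (p : ℕ) (x : ι → ℝ) :
    (cosKernel p x : ℂ) = ∑ K ∈ Fintype.piFinset fun _ => range (2 * p + 1),
      (∏ i, ((2 * p).choose (K i) : ℂ)) * e (∑ i, ((K i : ℤ) - p : ℤ) * x i) := by
  simp only [cosKernel, Complex.ofReal_prod, two_cos_pi_mul_pow, e_sum]
  rw [prod_univ_sum]
  simp only [prod_mul_distrib]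

lemma tendsto_average_cosKernel {θ : ι → ℝ} (α : ι → ℝ)
    (hθ : ∀ m : ι → ℤ, (∃ z : ℤ, ∑ i, (m i : ℝ) * θ i = z) → m = 0) (p : ℕ) :
    Tendsto (fun Q : ℕ => (Q : ℝ)⁻¹ * ∑ q ∈ range Q, cosKernel p (fun i => q * θ i - α i))
      atTop (𝓝 ((p.centralBinom : ℝ) ^ Fintype.card ι)) := by
  classical
  have hterm : ∀ K : ι → ℕ, Tendsto (fun Q : ℕ => (∏ i, ((2 * p).choose (K i) : ℂ)) *
      ((Q : ℂ)⁻¹ * ∑ q ∈ range Q, e (q * ∑ i, (((K i : ℤ) - p : ℤ) : ℝ) * θ i +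
        -∑ i, (((K i : ℤ) - p : ℤ) : ℝ) * α i)))
      atTop (𝓝 (if K = fun _ => p then ∏ i, ((2 * p).choose (K i) : ℂ) else 0)) := by
    intro K
    split_ifs with hK
    · refine tendsto_const_nhds.congr' ((eventually_ne_atTop 0).mono fun Q hQ => ?_)
      simp [hK, inv_mul_cancel₀ (Nat.cast_ne_zero.mpr hQ : (Q : ℂ) ≠ 0), e]
    · have ha : ∀ z : ℤ, ∑ i, (((K i : ℤ) - p : ℤ) : ℝ) * θ i ≠ z := fun z hz => hK <| by
        funext i
        have := congrFun (hθ _ ⟨z, hz⟩) i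
        simp only [Pi.zero_apply, sub_eq_zero] at this
        exact_mod_cast this
      simpa using (tendsto_average_e ha _).const_mul _
  have hsum := tendsto_finsetSum (Fintype.piFinset fun _ => range (2 * p + 1))
    fun K _ => hterm K
  rw [sum_ite_eq', if_pos (Fintype.mem_piFinset.mpr fun _ => mem_range.mpr (by omega))] at hsum
  rw [← tendsto_ofReal_iff]
  convert hsum using 2 with Q
  · push_cast
    simp only [cosKernel_eq_sum, mul_sum]
    rw [sum_comm]
    refine sum_congr rfl fun K _ => sum_congr rfl fun q _ => ?_
    have hphase : ∑ i, (((K i : ℤ) - p : ℤ) : ℝ) * (q * θ i - α i) =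
        q * ∑ i, ((K i : ℝ) - p) * θ i + -∑ i, ((K i : ℝ) - p) * α i := by
      push_cast
      rw [mul_sum, ← sum_neg_distrib, ← sum_add_distrib]
      exact sum_congr rfl fun i _ => by ring
    rw [hphase, mul_sum, mul_left_comm]
  · simp [Nat.centralBinom_eq_two_mul_choose]

lemma cosKernel_le (p : ℕ) {x : ι → ℝ} {ε : ℝ} (hε : 0 ≤ ε) {i₀ : ι}
    (hx : ∀ z : ℤ, ε ≤ |x i₀ - z|) :
    cosKernel p x ≤ 4 ^ (p * Fintype.card ι) * (cos (π * ε) ^ 2) ^ p := by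
  classical
  have hfactor : ∀ i, (2 * cos (π * x i)) ^ (2 * p) = 4 ^ p * (cos (π * x i) ^ 2) ^ p :=
    fun i => by rw [pow_mul, ← mul_pow]; ring
  simp only [cosKernel, hfactor, prod_mul_distrib, prod_const, card_univ]
  rw [← pow_mul]
  gcongr
  rw [← mul_prod_erase univ _ (mem_univ i₀)]
  calc (cos (π * x i₀) ^ 2) ^ p * ∏ i ∈ univ.erase i₀, (cos (π * x i) ^ 2) ^ p
      ≤ (cos (π * x i₀) ^ 2) ^ p * 1 := by
        gcongr
        exact prod_le_one (fun i _ => by positivity)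
          fun i _ => pow_le_one₀ (sq_nonneg _) (cos_sq_le_one _)
    _ ≤ (cos (π * ε) ^ 2) ^ p := by
        rw [mul_one, ← sq_abs (cos (π * x i₀))]
        gcongr
        exact abs_cos_pi_mul_le_s8 hε hx

end Kronecker

open Kronecker in
theorem kronecker_approximation_s8 {ι : Type*} [Fintype ι] {θ : ι → ℝ} (α : ι → ℝ)
    (hθ : ∀ m : ι → ℤ, (∃ z : ℤ, ∑ i, (m i : ℝ) * θ i = z) → m = 0) {ε : ℝ} (hε : 0 < ε) :
    ∃ q : ℕ, ∀ i, ∃ z : ℤ, |q * θ i - α i - z| < ε := by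
  classical
  by_contra! hfar
  set ε' := min ε (1 / 2)
  have hε' : 0 < ε' := lt_min hε one_half_pos
  set r := cos (π * ε') ^ 2
  have hr : |r| < 1 := by
    have hsin : 0 < sin (π * ε') :=
      sin_pos_of_pos_of_lt_pi (by positivity) (by nlinarith [pi_pos, min_le_right ε (1 / 2)])
    rw [abs_of_nonneg (sq_nonneg _), show r = 1 - sin (π * ε') ^ 2 from cos_sq' _]
    nlinarith
  set d := Fintype.card ι
  have hd : d ≠ 0 := Fintype.card_pos_iff.mpr ⟨(hfar 0).choose⟩ |>.ne'
  obtain ⟨p, hp4, hp⟩ : ∃ p : ℕ, 4 ≤ p ∧ (p : ℝ) ^ d * r ^ p < 1 :=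
    ((eventually_ge_atTop 4).and ((tendsto_pow_const_mul_const_pow_of_abs_lt_one d hr).eventually
      (gt_mem_nhds one_pos))).exists
  have hkernel : ∀ q : ℕ, cosKernel p (fun i => q * θ i - α i) ≤ 4 ^ (p * d) * r ^ p := by
    intro q
    obtain ⟨i, hi⟩ := hfar q
    exact cosKernel_le p hε'.le fun z => (min_le_left _ _).trans (hi z)
  have hmean : (p.centralBinom : ℝ) ^ d ≤ 4 ^ (p * d) * r ^ p := by
    refine le_of_tendsto (tendsto_average_cosKernel α hθ p)
      ((eventually_ge_atTop 1).mono fun Q hQ => ?_)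
    rw [inv_mul_le_iff₀ (by exact_mod_cast hQ)]
    simpa using sum_le_sum fun q (_ : q ∈ range Q) => hkernel q
  have hbinom : ((4 : ℝ) ^ p) ^ d < (p * p.centralBinom) ^ d :=
    pow_lt_pow_left₀ (by exact_mod_cast p.four_pow_lt_mul_centralBinom hp4) (by positivity) hd
  have : (4 : ℝ) ^ (p * d) < 4 ^ (p * d) * ((p : ℝ) ^ d * r ^ p) := by
    calc (4 : ℝ) ^ (p * d) < (p * p.centralBinom) ^ d := by rwa [pow_mul]
      _ ≤ (p : ℝ) ^ d * (4 ^ (p * d) * r ^ p) := by rw [mul_pow]; gcongr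
      _ = _ := by ring
  nlinarith [pow_pos (four_pos : (0 : ℝ) < 4) (p * d)]

lemma two_cos_eq_pow_sub_pow {N i : ℕ} (hN : N ≠ 0) (hi : i ≤ N) :
    ((2 * cos (2 * π * i / (2 * N : ℕ)) : ℝ) : ℂ) =
      Complex.exp (2 * π * Complex.I / (2 * N : ℕ)) ^ i -
        Complex.exp (2 * π * Complex.I / (2 * N : ℕ)) ^ (N - i) := by
  have hN' : (N : ℂ) ≠ 0 := Nat.cast_ne_zero.mpr hN
  set x : ℝ := 2 * π * i / (2 * N : ℕ)
  have hpow : Complex.exp (2 * π * Complex.I / (2 * N : ℕ)) ^ i = Complex.exp (x * Complex.I) := by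
    rw [← Complex.exp_nat_mul]; congr 1; simp only [x]; push_cast; ring
  have hpow' : Complex.exp (2 * π * Complex.I / (2 * N : ℕ)) ^ (N - i) =
      -Complex.exp (-x * Complex.I) := by
    rw [← Complex.exp_nat_mul, ← neg_one_mul, ← Complex.exp_pi_mul_I, ← Complex.exp_add]
    congr 1
    simp only [x]
    push_cast [Nat.cast_sub hi]
    field_simp
    ring
  rw [hpow, hpow', sub_neg_eq_add, Complex.ofReal_mul, Complex.ofReal_ofNat, Complex.ofReal_cos,
    Complex.two_cos, neg_mul]

lemma eq_zero_of_sum_mul_two_cos_eq_int (k : ℕ) (m : Ioo 0 (2 ^ k) → ℤ)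
    (hm : ∃ z : ℤ, ∑ i, (m i : ℝ) * (2 * cos (2 * π * (i : ℕ) / (2 ^ (k + 2) : ℕ))) = z) :
    m = 0 := by
  obtain ⟨z, hz⟩ := hm
  set N := 2 ^ (k + 1)
  have hn : 2 ^ (k + 2) = 2 * N := by ring
  set ζ := Complex.exp (2 * π * Complex.I / (2 * N : ℕ))
  have hζ : IsPrimitiveRoot ζ (2 * N) := Complex.isPrimitiveRoot_exp _ (by positivity)
  have hdeg : (minpoly ℚ ζ).degree = N := by
    rw [← cyclotomic_eq_minpoly_rat hζ (by positivity), degree_cyclotomic, ← hn,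
      Nat.totient_prime_pow Nat.prime_two (by omega)]
    simp [N]
  have hiN : ∀ i : Ioo 0 (2 ^ k), (i : ℕ) < 2 ^ k ∧ 2 ^ k < N := fun i =>
    ⟨(mem_Ioo.mp i.2).2, by have := Nat.two_pow_pos k; simp only [N, pow_succ]; omega⟩
  set P : ℚ[X] := ∑ i, (m i : ℚ) • (X ^ (i : ℕ) - X ^ (N - (i : ℕ))) - C (z : ℚ)
  have hP : aeval ζ P = 0 := by
    have hterm : ∀ i : Ioo 0 (2 ^ k), ζ ^ (i : ℕ) - ζ ^ (N - (i : ℕ)) =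
        ((2 * cos (2 * π * (i : ℕ) / (2 * N : ℕ)) : ℝ) : ℂ) := fun i =>
      (two_cos_eq_pow_sub_pow (by positivity) ((hiN i).1.trans (hiN i).2).le).symm
    rw [hn] at hz
    have hzC := congrArg (fun x : ℝ => (x : ℂ)) hz
    simp only [P, map_sub, map_sum, map_smul, map_pow, aeval_X, aeval_C, hterm, Rat.smul_def,
      eq_ratCast]
    push_cast at hzC ⊢
    linear_combination hzC
  have hPdeg : P.degree < N := by
    have hX : ∀ j < N, (X ^ j : ℚ[X]) ∈ degreeLT ℚ N := fun j hj => by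
      rw [mem_degreeLT, degree_X_pow]; exact_mod_cast hj
    have hmem : P ∈ degreeLT ℚ N := by
      refine Submodule.sub_mem _ (Submodule.sum_mem _ fun i _ => Submodule.smul_mem _ _
        (Submodule.sub_mem _ (hX _ ?_) (hX _ ?_))) ?_
      · exact (hiN i).1.trans (hiN i).2
      · have := hiN i; have := (mem_Ioo.mp i.2).1; omega
      · rw [← mul_one (C _), ← pow_zero X, ← smul_eq_C_mul]
        exact Submodule.smul_mem _ _ (hX 0 (by positivity))
    exact mem_degreeLT.mp hmem
  have hP0 : P = 0 :=
    eq_zero_of_dvd_of_degree_lt (minpoly.dvd ℚ ζ hP) (hdeg ▸ hPdeg)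
  funext i
  have hi := mem_Ioo.mp i.2
  have hcoeff := congrArg (coeff · (i : ℕ)) hP0
  have hne : ∀ j : Ioo 0 (2 ^ k), (i : ℕ) ≠ N - (j : ℕ) := fun j => by
    have := hiN j; have := hiN i; omega
  simp only [P, coeff_sub, finsetSum_coeff, coeff_smul, coeff_X_pow, coeff_C, hi.1.ne', hne,
    if_false, sub_zero, smul_eq_mul, mul_ite, mul_one, mul_zero, Subtype.val_inj, sum_ite_eq,
    mem_univ, if_true, coeff_zero] at hcoeff
  exact_mod_cast hcoeff

lemma exists_le_abs_cos_eq {a n l : ℕ} (hn : n = 4 * a) (hl : l < n) :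
    ∃ i ≤ a, |cos (2 * π * l / n)| = |cos (2 * π * i / n)| := by
  have ha : (a : ℝ) ≠ 0 := by rintro h; simp_all
  set g : ℝ → ℝ := fun x => cos (2 * π * x / n)
  have hg : ∀ x, g x = cos (π / 2 * (x / a)) := fun x => by
    simp only [g, hn]; push_cast; field_simp; ring_nf
  have hrefl : ∀ x, g (2 * a - x) = -g x := fun x => by
    rw [hg, hg, ← cos_pi_sub]; field_simp
  have hshift : ∀ x, g (x + 2 * a) = -g x := fun x => by
    rw [hg, hg, ← cos_add_pi]; field_simp
  have hperiod : ∀ x, g (4 * a - x) = g x := fun x => by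
    rw [hg, hg, ← cos_two_pi_sub]; field_simp; ring_nf
  change ∃ i ≤ a, |g l| = |g i|
  rcases le_or_gt l a with h | h
  · exact ⟨l, h, rfl⟩
  rcases le_or_gt l (2 * a) with h' | h'
  · obtain ⟨i, hi⟩ : ∃ i, l + i = 2 * a := ⟨2 * a - l, by omega⟩
    have hi' : (l : ℝ) + i = 2 * a := by exact_mod_cast hi
    refine ⟨i, by omega, ?_⟩
    rw [show (l : ℝ) = 2 * a - i by linarith, hrefl, abs_neg]
  rcases le_or_gt l (3 * a) with h'' | h''
  · obtain ⟨i, rfl⟩ : ∃ i, l = i + 2 * a := ⟨l - 2 * a, by omega⟩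
    refine ⟨i, by omega, ?_⟩
    rw [Nat.cast_add, Nat.cast_mul, Nat.cast_ofNat, hshift, abs_neg]
  · obtain ⟨i, hi⟩ : ∃ i, l + i = 4 * a := ⟨4 * a - l, by omega⟩
    have hi' : (l : ℝ) + i = 4 * a := by exact_mod_cast hi
    refine ⟨i, by omega, ?_⟩
    rw [show (l : ℝ) = 4 * a - i by linarith, hperiod]

lemma exists_int_abs_mul_sub_lt_of_abs_eq {t x y ε : ℝ} (hxy : |y| = |x|)
    (h : ∃ z : ℤ, |t * x - z| < ε) : ∃ z : ℤ, |t * y - z| < ε := by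
  obtain ⟨z, hz⟩ := h
  rcases abs_eq_abs.mp hxy with rfl | rfl
  · exact ⟨z, hz⟩
  · exact ⟨-z, by rw [Int.cast_neg, mul_neg, ← neg_add', abs_neg, ← sub_eq_add_neg]; exact hz⟩

lemma exists_nat_abs_odd_mul_cos_sub_int_lt {k n : ℕ} (hn : n = 2 ^ k) {ε : ℝ} (hε : 0 < ε) :
    ∃ q : ℕ, ∀ l < n, ∃ z : ℤ, |(2 * q + 1) * cos (2 * π * l / n) - z| < ε := by
  subst hn
  rcases k with _ | _ | k
  · refine ⟨0, fun l hl => ⟨1, ?_⟩⟩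
    obtain rfl : l = 0 := by omega
    simpa using hε
  · refine ⟨0, fun l hl => ?_⟩
    interval_cases l
    · exact ⟨1, by simpa using hε⟩
    · exact ⟨-1, by norm_num [hε]⟩
  obtain ⟨q, hq⟩ := kronecker_approximation_s8
    (fun i : Ioo 0 (2 ^ k) => -cos (2 * π * (i : ℕ) / (2 ^ (k + 2) : ℕ)))
    (eq_zero_of_sum_mul_two_cos_eq_int k) hε
  refine ⟨q, fun l hl => ?_⟩
  obtain ⟨i, hia, hi⟩ := exists_le_abs_cos_eq (a := 2 ^ k) (by ring) hl
  refine exists_int_abs_mul_sub_lt_of_abs_eq hi ?_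
  rcases eq_or_lt_of_le hia with rfl | hia
  · refine ⟨0, ?_⟩
    rw [show 2 * π * (2 ^ k : ℕ) / ((2 ^ (k + 2) : ℕ) : ℝ) = π / 2 by push_cast; field_simp; ring]
    simpa using hε
  rcases Nat.eq_zero_or_pos i with rfl | hi0
  · exact ⟨2 * q + 1, by simpa using hε⟩
  obtain ⟨z, hz⟩ := hq ⟨i, mem_Ioo.mpr ⟨hi0, hia⟩⟩
  exact ⟨z, by convert hz using 2; ring⟩

/-- For `n = 2^k`, there is a time `t = (2q+1)π/2` such that every eigenvalue
`λ_l = 2cos(2πl/n)` of `C_n` satisfies `|λ_l t - l'π| < δ/n` for some integer `l'`. -/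
theorem cycle_eigenvalue_approx_half (k : ℕ) (n : ℕ) (hn : n = 2 ^ k) :
    ∀ δ > 0, ∃ q : ℤ, ∀ l < n, ∃ l' : ℤ,
      |2 * Real.cos (2 * π * l / n) * ((2 * q + 1) * π / 2) - l' * π| < δ / n := by
  intro δ hδ
  have hn0 : (0 : ℝ) < n := by subst hn; positivity
  obtain ⟨q, hq⟩ := exists_nat_abs_odd_mul_cos_sub_int_lt hn (div_pos hδ (mul_pos hn0 pi_pos))
  refine ⟨q, fun l hl => ?_⟩
  obtain ⟨z, hz⟩ := hq l hl
  refine ⟨z, ?_⟩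
  calc |2 * cos (2 * π * l / n) * ((2 * (q : ℤ) + 1) * π / 2) - z * π|
      = |((2 * q + 1) * cos (2 * π * l / n) - z) * π| := by push_cast; ring_nf
    _ = |(2 * q + 1) * cos (2 * π * l / n) - z| * π := by rw [abs_mul, abs_of_pos pi_pos]
    _ < δ / (n * π) * π := by gcongr
    _ = δ / n := by field_simp
end
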